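/- arXiv:1808.00674 — 4 statements merged into one kernel-verified Lean document; each statement's English description precedes it below -/
import Mathlib

section
/- Let χ, S, T be binary words such that S is a factor of χ, T is not a factor of χ, and |T| ≥ 1. Suppose that for every j with 1 ≤ j ≤ |T|, the word S ++ T[1..j−1] ++ ¬T[j] (the concatenation of S, the first j−1 symbols of T, and the negation of the j-th symbol of T) is not a factor of χ. Then there exists j with 0 ≤ j < |T| such that S ++ T[1..j] is a suffix of χ. (This is the invariant establishing that when the Basic procedure receives |T| consecutive No answers, the right end of the hidden string has been reached.) -/
/-!
Suppose no `S ++ T[1..j]` with `j < |T|` is a suffix of `χ`. Then, starting from the factor `S`,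
each factor `S ++ T[1..j]` is not a suffix, so it extends to a factor by one more letter; the
letter `¬T[j+1]` is excluded, so `S ++ T[1..j+1]` is a factor. At `j = |T|` this makes `T` a factor
of `χ`, a contradiction.
-/

namespace List

theorem exists_append_singleton_infix_of_not_suffix {α : Type*} {w χ : List α}
    (h : w <:+: χ) (hns : ¬ w <:+ χ) : ∃ c, w ++ [c] <:+: χ := by
  obtain ⟨u, v, rfl⟩ := h
  cases v with
  | nil => exact absurd ⟨u, by simp⟩ hns
  | cons c v => exact ⟨c, u, v, by simp⟩

theorem append_singleton_infix_of_not_suffix {w χ : List Bool} (b : Bool)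
    (h : w <:+: χ) (hns : ¬ w <:+ χ) (hneg : ¬ w ++ [!b] <:+: χ) : w ++ [b] <:+: χ := by
  obtain ⟨c, hc⟩ := exists_append_singleton_infix_of_not_suffix h hns
  cases c <;> cases b <;> simp_all

theorem append_take_infix_of_not_suffix {S T χ : List Bool} (hS : S <:+: χ)
    (hNo : ∀ j (hj : j < T.length), ¬ S ++ T.take j ++ [!T[j]] <:+: χ)
    (hns : ∀ j < T.length, ¬ S ++ T.take j <:+ χ) :
    ∀ j ≤ T.length, S ++ T.take j <:+: χ := by
  intro j hj
  induction j with
  | zero => simpa using hS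
  | succ j ih =>
    have hjT : j < T.length := hj
    rw [take_succ_eq_append_getElem hjT, ← append_assoc]
    exact append_singleton_infix_of_not_suffix _ (ih hjT.le) (hns j hjT) (hNo j hjT)

end List

theorem basic_right_end_detection_general (χ S T : List Bool)
    (hS : S <:+: χ)
    (hT : ¬ T <:+: χ)
    (hNo : ∀ j, 1 ≤ j → j ≤ T.length →
      ¬ (S ++ T.take (j - 1) ++ [!(T.getD (j - 1) false)]) <:+: χ) :
    ∃ j, j < T.length ∧ (S ++ T.take j) <:+ χ := by
  by_contra! hns
  have hNo' : ∀ j (hj : j < T.length), ¬ S ++ T.take j ++ [!T[j]] <:+: χ := fun j hj => by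
    simpa [List.getElem?_eq_getElem hj] using hNo (j + 1) j.succ_pos hj
  have hST := List.append_take_infix_of_not_suffix hS hNo' hns T.length le_rfl
  rw [List.take_length] at hST
  exact hT ((List.suffix_append S T).isInfix.trans hST)

/-- If `S` is a factor of `χ`, `T` is not a factor of `χ`, `|T| ≥ 1`, and for
every `1 ≤ j ≤ |T|` the word `S ++ T[1..j-1] ++ ¬T[j]` is not a factor of `χ`,
then for some `0 ≤ j < |T|` the word `S ++ T[1..j]` is a suffix of `χ`. -/
theorem basic_right_end_detection (χ S T : List Bool)
    (hS : S <:+: χ)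
    (hT : ¬ T <:+: χ)
    (hTlen : 1 ≤ T.length)
    (hNo : ∀ j, 1 ≤ j → j ≤ T.length →
      ¬ (S ++ T.take (j - 1) ++ [!(T.getD (j - 1) false)]) <:+: χ) :
    ∃ j, j < T.length ∧ (S ++ T.take j) <:+ χ :=
  basic_right_end_detection_general χ S T hS hT hNo
end

section
/- For every natural number n ≥ 1, the sum over all binary words x of length n of max(0, d(x) − ⌈log₂ n⌉) is at most 2^{n+1}, where d(x) is the length of the longest run of 0's in x. (This bounds the upper-tail contribution in the average-case analysis: the total excess of the longest 0-run beyond log₂ n, summed over all 2^n strings, is at most 2·2^n.) -/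
/-!
Write `k = ⌈log₂ n⌉`. The excess `d(x) - k` counts the lengths `ℓ ∈ (k, n]` for which `0^ℓ` is a
factor of `x`, so after exchanging the sums it suffices to count, for each such `ℓ`, the words
containing `0^ℓ`. A union bound over the at most `n` starting positions gives at most
`n · 2^(n-ℓ)` of them, and summing the geometric series over `ℓ > k` yields
`n · 2^(n-k) ≤ 2^k · 2^(n-k) = 2^n`.
-/

noncomputable def longestZeroRun (x : List Bool) : ℕ :=
  sSup {ℓ : ℕ | List.replicate ℓ false <:+: x}

open Finset

theorem le_longestZeroRun_iff {x : List Bool} {ℓ : ℕ} :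
    ℓ ≤ longestZeroRun x ↔ List.replicate ℓ false <:+: x := by
  have hbdd : BddAbove {ℓ : ℕ | List.replicate ℓ false <:+: x} :=
    ⟨x.length, fun m hm => by simpa using hm.length_le⟩
  refine ⟨fun h => ?_, fun h => le_csSup hbdd h⟩
  have hmax : List.replicate (longestZeroRun x) false <:+: x := Nat.sSup_mem ⟨0, by simp⟩ hbdd
  refine (List.IsPrefix.isInfix ⟨List.replicate (longestZeroRun x - ℓ) false, ?_⟩).trans hmax
  rw [← List.replicate_add, Nat.add_sub_cancel' h]

theorem longestZeroRun_le_length (x : List Bool) : longestZeroRun x ≤ x.length := by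
  simpa using (le_longestZeroRun_iff.mp le_rfl).length_le

theorem longestZeroRun_sub_eq_card (x : List Bool) (k : ℕ) :
    longestZeroRun x - k = #{ℓ ∈ Ioc k x.length | List.replicate ℓ false <:+: x} := by
  have hlen := longestZeroRun_le_length x
  rw [← Nat.card_Ioc]
  congr 1
  ext ℓ
  simp only [mem_filter, mem_Ioc, ← le_longestZeroRun_iff]
  omega

theorem card_filter_forall_eq_false_le {ι : Type*} [Fintype ι] [DecidableEq ι] (S : Finset ι) :
    #{x : ι → Bool | ∀ i ∈ S, x i = false} ≤ 2 ^ (Fintype.card ι - #S) := by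
  calc #{x : ι → Bool | ∀ i ∈ S, x i = false}
      ≤ #(univ : Finset (↥Sᶜ → Bool)) := by
        refine card_le_card_of_injOn (fun x i => x i) (fun _ _ => mem_coe.2 (mem_univ _)) ?_
        intro x hx y hy hxy
        simp only [coe_filter, mem_univ, true_and, Set.mem_ofPred_eq] at hx hy
        funext i
        by_cases hi : i ∈ S
        · rw [hx i hi, hy i hi]
        · exact congrFun hxy ⟨i, mem_compl.2 hi⟩
    _ = 2 ^ (Fintype.card ι - #S) := by
        simp [Fintype.card_coe]

theorem exists_zero_window_of_replicate_infix {n ℓ : ℕ} {x : Fin n → Bool}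
    (h : List.replicate ℓ false <:+: List.ofFn x) :
    ∃ i < n + 1 - ℓ, ∀ p : Fin n, i ≤ p.val → p.val < i + ℓ → x p = false := by
  obtain ⟨s, t, hst⟩ := h
  have hlen : s.length + (ℓ + t.length) = n := by simpa using congrArg List.length hst
  refine ⟨s.length, by omega, fun p hip hpi => ?_⟩
  have hxp := List.getElem_of_eq hst (i := p.val) (by simp; omega)
  simp only [List.getElem_ofFn] at hxp
  rw [← hxp]
  simp only [List.getElem_append, List.length_append, List.length_replicate,
    List.getElem_replicate]
  rw [dif_pos hpi, dif_neg (Nat.not_lt.2 hip)]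

theorem card_filter_replicate_false_infix_le (n ℓ : ℕ) :
    #{x : Fin n → Bool | List.replicate ℓ false <:+: List.ofFn x}
      ≤ (n + 1 - ℓ) * 2 ^ (n - ℓ) := by
  calc #{x : Fin n → Bool | List.replicate ℓ false <:+: List.ofFn x}
      ≤ #((range (n + 1 - ℓ)).biUnion fun i =>
          {x : Fin n → Bool | ∀ p : Fin n, i ≤ p.val → p.val < i + ℓ → x p = false}) := by
        refine card_le_card fun x hx => ?_
        obtain ⟨i, hi, hzero⟩ := exists_zero_window_of_replicate_infix (mem_filter.1 hx).2
        exact mem_biUnion.2 ⟨i, mem_range.2 hi, mem_filter.2 ⟨mem_univ _, hzero⟩⟩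
    _ ≤ ∑ i ∈ range (n + 1 - ℓ),
          #{x : Fin n → Bool | ∀ p : Fin n, i ≤ p.val → p.val < i + ℓ → x p = false} :=
        card_biUnion_le
    _ ≤ ∑ _i ∈ range (n + 1 - ℓ), 2 ^ (n - ℓ) := by
        refine sum_le_sum fun i hi => ?_
        have hwin : ∀ m ∈ Ico i (i + ℓ), m < n := fun m hm => by
          have := mem_range.1 hi; have := mem_Ico.1 hm; omega
        have := card_filter_forall_eq_false_le ((Ico i (i + ℓ)).attachFin hwin)
        simp only [mem_attachFin, mem_Ico, Fintype.card_fin, card_attachFin, Nat.card_Ico,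
          Nat.add_sub_cancel_left] at this
        simpa only [and_imp] using this
    _ = (n + 1 - ℓ) * 2 ^ (n - ℓ) := by rw [sum_const, card_range, smul_eq_mul]

theorem sum_two_pow_sub_lt (k n : ℕ) : ∑ ℓ ∈ Ioc k n, 2 ^ (n - ℓ) < 2 ^ (n - k) := by
  rw [← sum_image (g := (n - ·)) fun a ha b hb hab => by
    have := mem_Ioc.1 ha; have := mem_Ioc.1 hb; simp only at hab; omega]
  refine Nat.geomSum_lt le_rfl fun m hm => ?_
  obtain ⟨ℓ, hℓ, rfl⟩ := mem_image.1 hm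
  have := mem_Ioc.1 hℓ
  omega

theorem sum_excess_longest_zero_run_le_general (n : ℕ) :
    ∑ x : Fin n → Bool, (longestZeroRun (List.ofFn x) - Nat.clog 2 n)
      ≤ 2 ^ (n + 1) := by
  set k := Nat.clog 2 n
  have hkn : k ≤ n := Nat.clog_le_of_le_pow (Nat.lt_two_pow_self).le
  calc ∑ x : Fin n → Bool, (longestZeroRun (List.ofFn x) - k)
      = ∑ x : Fin n → Bool, #{ℓ ∈ Ioc k n | List.replicate ℓ false <:+: List.ofFn x} := by
        simp only [longestZeroRun_sub_eq_card, List.length_ofFn]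
    _ = ∑ ℓ ∈ Ioc k n, #{x : Fin n → Bool | List.replicate ℓ false <:+: List.ofFn x} :=
        sum_card_bipartiteAbove_eq_sum_card_bipartiteBelow _
    _ ≤ ∑ ℓ ∈ Ioc k n, n * 2 ^ (n - ℓ) := sum_le_sum fun ℓ hℓ =>
        (card_filter_replicate_false_infix_le n ℓ).trans
          (Nat.mul_le_mul_right _ (by have := mem_Ioc.1 hℓ; omega))
    _ ≤ 2 ^ k * 2 ^ (n - k) := by
        rw [← mul_sum]
        exact Nat.mul_le_mul (Nat.le_pow_clog one_lt_two n) (sum_two_pow_sub_lt k n).le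
    _ ≤ 2 ^ (n + 1) := by
        rw [← pow_add]
        exact Nat.pow_le_pow_right two_pos (by omega)

/-- Summed over all binary words of length `n ≥ 1`, the excess of the longest
`0`-run beyond `⌈log₂ n⌉` is at most `2 ^ (n + 1)`. -/
theorem sum_excess_longest_zero_run_le (n : ℕ) (hn : 1 ≤ n) :
    ∑ x : Fin n → Bool, (longestZeroRun (List.ofFn x) - Nat.clog 2 n)
      ≤ 2 ^ (n + 1) :=
  sum_excess_longest_zero_run_le_general n
end

section
/- For every natural number n ≥ 16 and every natural number ℓ with 1 ≤ ℓ ≤ log₂ n − 1, the following real inequality holds: (1 − 1/(2^{ℓ+1} − 1))^{n−ℓ+1} · (1 − 2^{−ℓ}) < 1/2. (This is the ratio estimate β(ℓ−1)/β(ℓ) < 2^{−1} used to show that the lower-tail counts in the average-case analysis decay geometrically.) -/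
/-!
Write `b = 2^(ℓ+1) - 1` and `k = n - ℓ + 1`. The hypothesis on `ℓ` says `2^(ℓ+1) ≤ n`, and since
`4ℓ ≤ 2^(ℓ+1)` this gives `k ≥ 3b/4`. Hence `(1 - 1/b)^k ≤ exp (-k/b) ≤ exp (-3/4) < 1/2`, because
`log 2 < 3/4`; the factor `1 - 2^(-ℓ)` lies in `[0, 1]`.
-/

open Real

lemma one_sub_one_div_pow_lt_half {b : ℝ} (hb : 1 ≤ b) {k : ℕ} (hk : 3 * b ≤ 4 * k) :
    (1 - 1 / b) ^ k < 1 / 2 := by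
  have hb0 : 0 < b := by linarith
  have hkb : 3 / 4 ≤ k / b := by rw [le_div_iff₀ hb0]; linarith
  have two_lt_exp : 2 < exp (3 / 4) :=
    (log_lt_iff_lt_exp two_pos).1 (log_two_lt_d9.trans (by norm_num))
  calc (1 - 1 / b) ^ k
      ≤ exp (-(1 / b)) ^ k :=
        pow_le_pow_left₀ (sub_nonneg.2 ((div_le_one hb0).2 hb)) (one_sub_le_exp_neg _) k
    _ = exp (-(k / b)) := by rw [← exp_nat_mul]; ring_nf
    _ ≤ exp (-(3 / 4)) := exp_le_exp.2 (neg_le_neg hkb)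
    _ < 1 / 2 := by
      rw [exp_neg, one_div]
      exact inv_strictAnti₀ two_pos two_lt_exp

lemma four_mul_le_two_pow_succ (m : ℕ) : 4 * m ≤ 2 ^ (m + 1) := by
  induction m with
  | zero => simp
  | succ m ih =>
    have : 2 ≤ 2 ^ (m + 1) := Nat.le_self_pow m.succ_ne_zero 2
    rw [pow_succ]
    rcases m with _ | m <;> omega

lemma two_pow_le_of_le_logb {m n : ℕ} (hm : 0 < m) (h : (m : ℝ) ≤ logb 2 n) : 2 ^ m ≤ n := by
  have hn : 0 < n := by
    by_contra! hn0
    rw [Nat.le_zero.1 hn0] at h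
    simp only [CharP.cast_eq_zero, logb_zero] at h
    exact absurd h (by exact_mod_cast hm.not_ge)
  have := (le_logb_iff_rpow_le one_lt_two (by exact_mod_cast hn)).1 h
  exact_mod_cast (rpow_natCast (2 : ℝ) m) ▸ this

theorem beta_ratio_lt_half_general (n ℓ : ℕ)
    (hℓ2 : (ℓ : ℝ) ≤ Real.logb 2 n - 1) :
    ((1 : ℝ) - 1 / (2 ^ (ℓ + 1) - 1)) ^ (n - ℓ + 1) * (1 - 1 / 2 ^ ℓ)
      < 1 / 2 := by
  have hn : 2 ^ (ℓ + 1) ≤ n := two_pow_le_of_le_logb ℓ.succ_pos (by push_cast; linarith)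
  have hℓ := four_mul_le_two_pow_succ ℓ
  have hℓn : ℓ ≤ n := by omega
  have hnR : (2 : ℝ) ^ (ℓ + 1) ≤ n := by exact_mod_cast hn
  have hℓR : 4 * (ℓ : ℝ) ≤ 2 ^ (ℓ + 1) := by exact_mod_cast hℓ
  have hb : 1 ≤ (2 : ℝ) ^ (ℓ + 1) - 1 := by
    have : (2 : ℝ) ≤ 2 ^ (ℓ + 1) := le_self_pow₀ one_le_two ℓ.succ_ne_zero
    linarith
  have hk : 3 * ((2 : ℝ) ^ (ℓ + 1) - 1) ≤ 4 * ((n - ℓ + 1 : ℕ) : ℝ) := by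
    rw [Nat.cast_add, Nat.cast_sub hℓn]
    push_cast
    linarith
  have hbase : 0 ≤ (1 : ℝ) - 1 / (2 ^ (ℓ + 1) - 1) :=
    sub_nonneg.2 ((div_le_one (by linarith)).2 hb)
  calc ((1 : ℝ) - 1 / (2 ^ (ℓ + 1) - 1)) ^ (n - ℓ + 1) * (1 - 1 / 2 ^ ℓ)
      ≤ ((1 : ℝ) - 1 / (2 ^ (ℓ + 1) - 1)) ^ (n - ℓ + 1) :=
        mul_le_of_le_one_right (pow_nonneg hbase _) (sub_le_self _ (by positivity))
    _ < 1 / 2 := one_sub_one_div_pow_lt_half hb hk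

/-- The ratio estimate `β(ℓ-1)/β(ℓ) < 1/2` from the average-case analysis:
for `n ≥ 16` and `1 ≤ ℓ ≤ log₂ n - 1`,
`(1 - 1/(2^{ℓ+1} - 1))^{n-ℓ+1} * (1 - 2^{-ℓ}) < 1/2`. -/
theorem beta_ratio_lt_half (n ℓ : ℕ) (hn : 16 ≤ n) (hℓ1 : 1 ≤ ℓ)
    (hℓ2 : (ℓ : ℝ) ≤ Real.logb 2 n - 1) :
    ((1 : ℝ) - 1 / (2 ^ (ℓ + 1) - 1)) ^ (n - ℓ + 1) * (1 - 1 / 2 ^ ℓ)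
      < 1 / 2 :=
  beta_ratio_lt_half_general n ℓ hℓ2
end

section
/- Let k ≥ 1 and let X and Y be binary words with |X| ≥ 2k and |Y| ≥ 2k. Suppose X has period p with 1 ≤ p ≤ k, Y has period q with 1 ≤ q ≤ k, and the suffix of X of length 2k equals the prefix of Y of length 2k. Then both X and Y have period gcd(p, q). (This is the claim from the analysis of bad positions: if two periodic strings with blocks of length at most k overlap in at least 2k symbols, they share the same repetition structure.) -/
/-!
The common factor `W = Y.take (2 * k)` of `X` and `Y` inherits both periods `p` and `q`, and
`p + q ≤ 2 * k = |W|`, so by the Fine–Wilf theorem `W` has period `g = gcd p q`. A period `g` of a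
prefix (or suffix) of length at least `q + g` of a word with period `q` extends to the whole word:
every pair of positions at distance `g` is moved into that factor by steps of `q`.
-/

/-- `HasPeriod w p` : the word `w` has period `p`, i.e. `w[i] = w[i+p]`
whenever both positions are inside `w` (0-based indexing). -/
def HasPeriod (w : List Bool) (p : ℕ) : Prop :=
  ∀ i, i + p < w.length → w.getD i false = w.getD (i + p) false

theorem List.IsPrefix.getD_eq {α : Type*} {u w : List α} (hu : u <+: w) {i : ℕ}
    (hi : i < u.length) (d : α) : u.getD i d = w.getD i d := by
  obtain ⟨t, rfl⟩ := hu
  exact (List.getD_append u t d i hi).symm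

namespace HasPeriod

variable {w : List Bool} {p q g : ℕ}

theorem reverse (h : HasPeriod w p) : HasPeriod w.reverse p := by
  intro i hi
  rw [List.length_reverse] at hi
  rw [List.getD_reverse i (by omega), List.getD_reverse (i + p) hi]
  have := h (w.length - 1 - (i + p)) (by omega)
  rw [show w.length - 1 - (i + p) + p = w.length - 1 - i by omega] at this
  exact this.symm

theorem _root_.hasPeriod_reverse_iff : HasPeriod w.reverse p ↔ HasPeriod w p :=
  ⟨fun h => w.reverse_reverse ▸ h.reverse, reverse⟩

theorem _root_.List.IsPrefix.hasPeriod {u : List Bool} (hu : u <+: w) (h : HasPeriod w p) :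
    HasPeriod u p := fun i hi => by
  rw [hu.getD_eq (by omega) false, hu.getD_eq hi false]
  exact h i (by have := hu.length_le; omega)

theorem _root_.List.IsSuffix.hasPeriod {u : List Bool} (hu : u <:+ w) (h : HasPeriod w p) :
    HasPeriod u p :=
  hasPeriod_reverse_iff.mp ((List.reverse_prefix.mpr hu).hasPeriod h.reverse)

theorem sub (hp : HasPeriod w p) (hq : HasPeriod w q) (hpq : p ≤ q) (hlen : p + q ≤ w.length) :
    HasPeriod w (q - p) := by
  intro i hi
  rcases lt_or_ge (i + q) w.length with h | h
  · have hstep := hp (i + (q - p)) (by omega)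
    rw [show i + (q - p) + p = i + q by omega] at hstep
    rw [hq i h, hstep]
  · have hback := hp (i - p) (by omega)
    have hfwd := hq (i - p) (by omega)
    rw [Nat.sub_add_cancel (by omega)] at hback
    rw [show i - p + q = i + (q - p) by omega] at hfwd
    rw [← hback, hfwd]

/-- Fine–Wilf theorem, in the weak form with `p + q` in place of `p + q - gcd p q`. -/
theorem gcd (hp : HasPeriod w p) (hq : HasPeriod w q) (hlen : p + q ≤ w.length) :
    HasPeriod w (Nat.gcd p q) := by
  induction hn : p + q using Nat.strong_induction_on generalizing p q with
  | _ n ih =>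
  rcases Nat.eq_zero_or_pos p with rfl | hp0
  · simpa using hq
  rcases Nat.eq_zero_or_pos q with rfl | hq0
  · simpa using hp
  rcases le_total p q with hpq | hqp
  · rw [← Nat.gcd_sub_self_right hpq]
    exact ih q (by omega) hp (hp.sub hq hpq hlen) (by omega) (by omega)
  · rw [← Nat.gcd_sub_self_left hqp]
    exact ih p (by omega) (hq.sub hp hqp (by omega)) hq (by omega) (by omega)

theorem of_isPrefix {u : List Bool} (hw : HasPeriod w q) (hq : 0 < q) (hu : u <+: w)
    (hug : HasPeriod u g) (hlen : q + g ≤ u.length) : HasPeriod w g := by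
  intro i
  induction i using Nat.strong_induction_on with
  | _ i ih =>
  intro hi
  rcases lt_or_ge (i + g) u.length with h | h
  · rw [← hu.getD_eq (by omega) false, ← hu.getD_eq h false]
    exact hug i h
  · have hback := ih (i - q) (by omega) (by omega)
    rw [hw (i - q) (by omega), hw (i - q + g) (by omega), Nat.sub_add_cancel (by omega),
      show i - q + g + q = i + g by omega] at hback
    exact hback

theorem of_isSuffix {u : List Bool} (hw : HasPeriod w p) (hp : 0 < p) (hu : u <:+ w)
    (hug : HasPeriod u g) (hlen : p + g ≤ u.length) : HasPeriod w g := by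
  rw [← hasPeriod_reverse_iff] at hw hug ⊢
  exact hw.of_isPrefix hp (List.reverse_prefix.mpr hu) hug (by rwa [List.length_reverse])

end HasPeriod

theorem overlap_same_repetition_structure_general (k : ℕ) (X Y : List Bool)
    (p q : ℕ)
    (hY : 2 * k ≤ Y.length)
    (hp1 : 1 ≤ p) (hpk : p ≤ k) (hXper : HasPeriod X p)
    (hq1 : 1 ≤ q) (hqk : q ≤ k) (hYper : HasPeriod Y q)
    (hoverlap : X.drop (X.length - 2 * k) = Y.take (2 * k)) :
    HasPeriod X (Nat.gcd p q) ∧ HasPeriod Y (Nat.gcd p q) := by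
  have hsuffix : Y.take (2 * k) <:+ X := hoverlap ▸ X.drop_suffix _
  have hprefix : Y.take (2 * k) <+: Y := Y.take_prefix _
  have hlen : (Y.take (2 * k)).length = 2 * k := List.length_take_of_le hY
  have hgp : Nat.gcd p q ≤ p := Nat.gcd_le_left q hp1
  have hgq : Nat.gcd p q ≤ q := Nat.gcd_le_right p hq1
  have hshared : HasPeriod (Y.take (2 * k)) (Nat.gcd p q) :=
    (hsuffix.hasPeriod hXper).gcd (hprefix.hasPeriod hYper) (by omega)
  exact ⟨hXper.of_isSuffix hp1 hsuffix hshared (by omega),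
    hYper.of_isPrefix hq1 hprefix hshared (by omega)⟩

/-- If two periodic words with periods at most `k` overlap in `2k` symbols
(the suffix of `X` of length `2k` equals the prefix of `Y` of length `2k`),
then both have period `gcd p q`. -/
theorem overlap_same_repetition_structure (k : ℕ) (X Y : List Bool)
    (p q : ℕ) (hk : 1 ≤ k)
    (hX : 2 * k ≤ X.length) (hY : 2 * k ≤ Y.length)
    (hp1 : 1 ≤ p) (hpk : p ≤ k) (hXper : HasPeriod X p)
    (hq1 : 1 ≤ q) (hqk : q ≤ k) (hYper : HasPeriod Y q)
    (hoverlap : X.drop (X.length - 2 * k) = Y.take (2 * k)) :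
    HasPeriod X (Nat.gcd p q) ∧ HasPeriod Y (Nat.gcd p q) :=
  overlap_same_repetition_structure_general k X Y p q hY hp1 hpk hXper hq1 hqk hYper hoverlap
end
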